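/- Let A be a nonnegative n×n real matrix with support. Then for every (y,z) ∈ ℝ^n × ℝ^n the Newton system is consistent: there exists w ∈ ℝ^n × ℝ^n such that H(y,z) w = −∇f(y,z). Equivalently, ∇f(y,z) is orthogonal to the null space of H(y,z). -/

import Mathlib

open Finset Matrix

/-!
The Hessian is the signless Laplacian of the bipartite graph weighted by `B`: its quadratic form
at `(u, w)` is `∑ i j, B i j * (u i + w j) ^ 2`. As `B ≥ 0`, a kernel vector has `u i + w j = 0`
wherever `B i j > 0`, in particular along the positive diagonal `j = σ i`. Pairing the gradient
with it gives `∑ i j, B i j * (u i + w j) - (∑ u + ∑ w) = 0 - 0`. So the gradient is orthogonal to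
the kernel of the symmetric matrix `H`, hence lies in its range.
-/

theorem Matrix.exists_transpose_mulVec_eq_of_dotProduct_eq_zero {m n : Type*} [Fintype m]
    [Fintype n] [DecidableEq m] [DecidableEq n] (M : Matrix m n ℝ) (g : n → ℝ)
    (hg : ∀ v, M *ᵥ v = 0 → g ⬝ᵥ v = 0) : ∃ w, Mᵀ *ᵥ w = g := by
  have hmem : WithLp.toLp 2 g ∈ (toEuclideanLin M).kerᗮ := by
    refine (Submodule.mem_orthogonal' _ _).2 fun v hv => ?_
    have := hg v.ofLp (congrArg WithLp.ofLp hv)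
    simpa [PiLp.inner_apply, dotProduct, mul_comm] using this
  rw [LinearMap.orthogonal_ker, ← toEuclideanLin_conjTranspose_eq_adjoint] at hmem
  obtain ⟨w, hw⟩ := hmem
  exact ⟨w.ofLp, by simpa using congrArg WithLp.ofLp hw⟩

section ScalingHessian

variable {m n : Type*} [Fintype m] [Fintype n]

def scalingGradient (B : Matrix m n ℝ) : m ⊕ n → ℝ :=
  Sum.elim (fun i => (∑ j, B i j) - 1) fun j => (∑ i, B i j) - 1

theorem scalingGradient_dotProduct_sumElim (B : Matrix m n ℝ) (u : m → ℝ) (w : n → ℝ) :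
    scalingGradient B ⬝ᵥ Sum.elim u w =
      ∑ i, ∑ j, B i j * (u i + w j) - (∑ i, u i + ∑ j, w j) := by
  rw [scalingGradient, sumElim_dotProduct_sumElim]
  simp only [dotProduct, sub_mul, one_mul, Finset.sum_sub_distrib, Finset.sum_mul, mul_add,
    Finset.sum_add_distrib]
  rw [Finset.sum_comm (γ := n)]
  ring

variable [DecidableEq m] [DecidableEq n]

def scalingHessian (B : Matrix m n ℝ) : Matrix (m ⊕ n) (m ⊕ n) ℝ :=
  fromBlocks (diagonal fun i => ∑ j, B i j) B Bᵀ (diagonal fun j => ∑ i, B i j)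

theorem scalingHessian_transpose (B : Matrix m n ℝ) :
    (scalingHessian B)ᵀ = scalingHessian B := by
  simp [scalingHessian, fromBlocks_transpose]

theorem scalingHessian_mulVec_inl (B : Matrix m n ℝ) (u : m → ℝ) (w : n → ℝ) (i : m) :
    (scalingHessian B *ᵥ Sum.elim u w) (Sum.inl i) = ∑ j, B i j * (u i + w j) := by
  rw [scalingHessian, fromBlocks_mulVec, Sum.elim_inl, Pi.add_apply, Sum.elim_comp_inl,
    Sum.elim_comp_inr, mulVec_diagonal, Finset.sum_mul, mulVec, dotProduct,
    ← Finset.sum_add_distrib]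
  simp only [mul_add]

theorem scalingHessian_mulVec_inr (B : Matrix m n ℝ) (u : m → ℝ) (w : n → ℝ) (j : n) :
    (scalingHessian B *ᵥ Sum.elim u w) (Sum.inr j) = ∑ i, B i j * (u i + w j) := by
  rw [scalingHessian, fromBlocks_mulVec, Sum.elim_inr, Pi.add_apply, Sum.elim_comp_inl,
    Sum.elim_comp_inr, mulVec_diagonal, Finset.sum_mul, mulVec, dotProduct,
    ← Finset.sum_add_distrib]
  simp only [transpose_apply, mul_add]

theorem sumElim_dotProduct_scalingHessian_mulVec (B : Matrix m n ℝ) (u : m → ℝ) (w : n → ℝ) :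
    Sum.elim u w ⬝ᵥ (scalingHessian B *ᵥ Sum.elim u w) = ∑ i, ∑ j, B i j * (u i + w j) ^ 2 := by
  simp only [dotProduct, Fintype.sum_sum_type, Sum.elim_inl, Sum.elim_inr,
    scalingHessian_mulVec_inl, scalingHessian_mulVec_inr, Finset.mul_sum]
  rw [Finset.sum_comm (s := Finset.univ (α := n)), ← Finset.sum_add_distrib]
  exact Finset.sum_congr rfl fun i _ => by rw [← Finset.sum_add_distrib]; congr 1; ext j; ring

theorem mul_add_eq_zero_of_scalingHessian_mulVec_eq_zero {B : Matrix m n ℝ}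
    (hB : ∀ i j, 0 ≤ B i j) {u : m → ℝ} {w : n → ℝ} (h : scalingHessian B *ᵥ Sum.elim u w = 0)
    (i : m) (j : n) : B i j * (u i + w j) = 0 := by
  have hnonneg : ∀ i j, 0 ≤ B i j * (u i + w j) ^ 2 := fun i j =>
    mul_nonneg (hB i j) (sq_nonneg _)
  have hq : ∑ i, ∑ j, B i j * (u i + w j) ^ 2 = 0 := by
    rw [← sumElim_dotProduct_scalingHessian_mulVec, h, dotProduct_zero]
  rw [Finset.sum_eq_zero_iff_of_nonneg fun i _ => Finset.sum_nonneg fun j _ => hnonneg i j] at hq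
  have hij : B i j * (u i + w j) ^ 2 = 0 :=
    (Finset.sum_eq_zero_iff_of_nonneg fun j _ => hnonneg i j).1 (hq i (mem_univ i)) j (mem_univ j)
  rcases mul_eq_zero.1 hij with h0 | h0
  · rw [h0, zero_mul]
  · rw [pow_eq_zero_iff two_ne_zero |>.1 h0, mul_zero]

end ScalingHessian

theorem exists_scalingHessian_mulVec_eq_neg_scalingGradient {ι : Type*} [Fintype ι]
    [DecidableEq ι] {B : Matrix ι ι ℝ} (hB : ∀ i j, 0 ≤ B i j) {σ : Equiv.Perm ι}
    (hσ : ∀ i, 0 < B i (σ i)) : ∃ v, scalingHessian B *ᵥ v = -scalingGradient B := by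
  suffices h : ∀ v, scalingHessian B *ᵥ v = 0 → -scalingGradient B ⬝ᵥ v = 0 by
    simpa only [scalingHessian_transpose] using
      exists_transpose_mulVec_eq_of_dotProduct_eq_zero _ _ h
  intro v hv
  obtain ⟨u, w, rfl⟩ : ∃ u w, v = Sum.elim u w :=
    ⟨v ∘ Sum.inl, v ∘ Sum.inr, (Sum.elim_comp_inl_inr v).symm⟩
  have hker := mul_add_eq_zero_of_scalingHessian_mulVec_eq_zero hB hv
  have hsum : ∑ i, u i + ∑ j, w j = 0 := by
    rw [← Equiv.sum_comp σ w, ← Finset.sum_add_distrib]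
    exact Finset.sum_eq_zero fun i _ => (mul_eq_zero.1 (hker i (σ i))).resolve_left (hσ i).ne'
  rw [neg_dotProduct, scalingGradient_dotProduct_sumElim, hsum,
    Finset.sum_eq_zero fun i _ => Finset.sum_eq_zero fun j _ => hker i j, sub_zero, neg_zero]

/-- if the nonnegative matrix `A` has support, then for every `(y,z)`
the Newton system `H(y,z) w = −∇f(y,z)` is consistent, where `H` is the Hessian
and `∇f` the gradient of the negative-entropy dual objective. -/
theorem stmt6 (n : ℕ) (A : Matrix (Fin n) (Fin n) ℝ) (hA : ∀ i j, 0 ≤ A i j)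
    (hsupp : ∃ σ : Equiv.Perm (Fin n), ∀ i, 0 < A i (σ i))
    (y z : Fin n → ℝ)
    (B : Matrix (Fin n) (Fin n) ℝ)
    (hB : ∀ i j, B i j = A i j * Real.exp (y i + z j))
    (H : Matrix (Fin n ⊕ Fin n) (Fin n ⊕ Fin n) ℝ)
    (hH : H = Matrix.fromBlocks
      (Matrix.diagonal fun i => ∑ j, B i j) B
      Bᵀ (Matrix.diagonal fun j => ∑ i, B i j))
    (grad : Fin n ⊕ Fin n → ℝ)
    (hgrad : grad = Sum.elim (fun i => (∑ j, B i j) - 1) fun j => (∑ i, B i j) - 1) :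
    ∃ w : Fin n ⊕ Fin n → ℝ, H *ᵥ w = -grad := by
  obtain ⟨σ, hσ⟩ := hsupp
  subst hH hgrad
  refine exists_scalingHessian_mulVec_eq_neg_scalingGradient (σ := σ) (fun i j => ?_) fun i => ?_
  · rw [hB]; exact mul_nonneg (hA i j) (Real.exp_pos _).le
  · rw [hB]; exact mul_pos (hσ i) (Real.exp_pos _)
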